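/- arXiv:2110.15123 — 5 statements merged into one kernel-verified Lean document; each statement's English description precedes it below -/
import Mathlib

section
/- 6174 is the unique fixed point of the 4-digit Kaprekar map among numbers n with 0 < n < 10000 that do not have all four digits equal. -/
/-!
If the padded digits of `n` sorted ascending are `a ≤ b ≤ c ≤ d`, then
`K(n) = (1000d + 100c + 10b + a) - (1000a + 100b + 10c + d) = 999 (d - a) + 90 (c - b)`.
So a fixed point of `K` is one of the 55 numbers `999 p + 90 q` with `q ≤ p ≤ 9`, and evaluating
`K` on each of them leaves only `0` and `6174`.
-/

/-- The decimal digits of `n` (little-endian), padded with zeros to length `w`. -/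
def padDigits (w n : ℕ) : List ℕ := (Nat.digits 10 n ++ List.replicate w 0).take w

/-- The padded digits of `n` sorted ascending (little-endian), so that
`Nat.ofDigits 10 (sortedDigits w n)` is the descending arrangement `X` and
`Nat.ofDigits 10 (sortedDigits w n).reverse` is the ascending arrangement `Y`. -/
def sortedDigits (w n : ℕ) : List ℕ := (padDigits w n).mergeSort (· ≤ ·)

/-- The Kaprekar map on `w`-digit numbers: descending arrangement minus ascending arrangement. -/
def kap (w n : ℕ) : ℕ :=
  Nat.ofDigits 10 (sortedDigits w n) - Nat.ofDigits 10 (sortedDigits w n).reverse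

/-- All `w` (padded) digits of `n` are equal. -/
def allEqDigits (w n : ℕ) : Prop := ∃ d, padDigits w n = List.replicate w d

@[simp]
lemma padDigits_zero (n : ℕ) : padDigits 0 n = [] := by
  simp [padDigits]

lemma padDigits_succ (w n : ℕ) : padDigits (w + 1) n = n % 10 :: padDigits w (n / 10) := by
  rcases Nat.eq_zero_or_pos n with rfl | hn
  · simp [padDigits, List.replicate_succ]
  · simp [padDigits, Nat.digits_def' (by norm_num : 1 < 10) hn, List.take_append,
      List.take_replicate, Nat.add_assoc]

lemma length_padDigits (w n : ℕ) : (padDigits w n).length = w := by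
  simp [padDigits]

lemma lt_ten_of_mem_padDigits {w n d : ℕ} (hd : d ∈ padDigits w n) : d < 10 := by
  induction w generalizing n with
  | zero => simp at hd
  | succ w ih =>
    rw [padDigits_succ, List.mem_cons] at hd
    rcases hd with rfl | hd
    · exact Nat.mod_lt _ (by norm_num)
    · exact ih hd

lemma exists_kap_four_eq (n : ℕ) : ∃ p ≤ 9, ∃ q ≤ p, kap 4 n = 999 * p + 90 * q := by
  have hlen : (sortedDigits 4 n).length = 4 := by
    rw [sortedDigits, List.length_mergeSort, length_padDigits]
  have hsorted : (sortedDigits 4 n).Pairwise (· ≤ ·) := List.pairwise_mergeSort' _ _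
  have hdigit : ∀ d ∈ sortedDigits 4 n, d < 10 := fun d hd =>
    lt_ten_of_mem_padDigits ((List.mergeSort_perm _ _).mem_iff.mp hd)
  obtain ⟨a, b, c, d, hl⟩ := List.length_eq_four.mp hlen
  rw [hl] at hsorted hdigit
  obtain ⟨⟨hab, -⟩, ⟨hbc, -⟩, hcd⟩ : (a ≤ b ∧ _) ∧ (b ≤ c ∧ _) ∧ c ≤ d := by
    simpa using hsorted
  have hd : d < 10 := hdigit d (by simp)
  refine ⟨d - a, by omega, c - b, by omega, ?_⟩
  simp only [kap, hl, List.reverse_cons, List.reverse_nil, List.nil_append, List.cons_append,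
    Nat.ofDigits_cons, Nat.ofDigits_nil]
  omega

-- `Nat.digits` and `List.mergeSort` are defined by well-founded recursion, which the kernel does
-- not evaluate; after this rewrite and `padDigits_succ`, `decide` can compute `kap 4`.
lemma kap_four_eq_insertionSort (n : ℕ) :
    kap 4 n = Nat.ofDigits 10 ((padDigits 4 n).insertionSort (· ≤ ·)) -
      Nat.ofDigits 10 ((padDigits 4 n).insertionSort (· ≤ ·)).reverse := by
  rw [kap, sortedDigits, List.mergeSort_eq_insertionSort]

lemma eq_zero_or_6174_of_kap_four_eq_self_of_image :
    ∀ p ≤ 9, ∀ q ≤ p, kap 4 (999 * p + 90 * q) = 999 * p + 90 * q →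
      999 * p + 90 * q = 0 ∨ 999 * p + 90 * q = 6174 := by
  simp only [kap_four_eq_insertionSort, padDigits_succ, padDigits_zero]
  decide

lemma kap_four_6174 : kap 4 6174 = 6174 := by
  simp only [kap_four_eq_insertionSort, padDigits_succ, padDigits_zero]
  decide

theorem stmt1_general (n : ℕ) (h0 : 0 < n) :
    kap 4 n = n ↔ n = 6174 := by
  refine ⟨fun hfix => ?_, fun h => h ▸ kap_four_6174⟩
  obtain ⟨p, hp, q, hq, hkap⟩ := exists_kap_four_eq n
  rw [hkap] at hfix
  subst hfix
  have := eq_zero_or_6174_of_kap_four_eq_self_of_image p hp q hq hkap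
  omega

theorem stmt1 (n : ℕ) (h0 : 0 < n) (h1 : n < 10000) (h2 : ¬ allEqDigits 4 n) :
    kap 4 n = n ↔ n = 6174 :=
  stmt1_general n h0
end

section
/- For any n with 0 < n < 10000 whose four decimal digits are not all equal, if the ordered digits a₀ ≥ b₀ ≥ c₀ ≥ d₀ of n satisfy b₀ > c₀, then K(n) has digit sum 18; if b₀ = c₀, then K(n) has digit sum 27. -/
/-!
With `α = a₀ - d₀` and `β = b₀ - c₀` the Kaprekar difference is `999 α + 90 β`, and `1 ≤ α ≤ 9`
because the digits are not all equal. This number is the digit string `(α, β - 1, 9 - β, 10 - α)`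
when `β > 0` and `(α - 1, 9, 9, 10 - α)` when `β = 0`; every entry lies in `[0, 9]`, so the digit
sum is the sum of the entries, `18` resp. `27`.
-/

theorem sortedDigits_pairwise_le (w n : ℕ) : (sortedDigits w n).Pairwise (· ≤ ·) :=
  List.pairwise_mergeSort' _ _

theorem sortedDigits_four_chain {n a b c d : ℕ} (hs : sortedDigits 4 n = [d, c, b, a]) :
    d ≤ c ∧ c ≤ b ∧ b ≤ a := by
  have hsorted := sortedDigits_pairwise_le 4 n
  rw [hs] at hsorted
  simp only [List.pairwise_cons, List.mem_cons, List.not_mem_nil] at hsorted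
  exact ⟨hsorted.1 c (by simp), hsorted.2.1 b (by simp), hsorted.2.2.1 a (by simp)⟩

theorem lt_ten_of_mem_sortedDigits {w n x : ℕ} (hx : x ∈ sortedDigits w n) : x < 10 := by
  rcases List.mem_append.mp (List.mem_of_mem_take (List.mem_mergeSort.mp hx)) with h | h
  · exact Nat.digits_lt_base (by norm_num) h
  · rw [(List.mem_replicate.mp h).2]
    norm_num

theorem allEqDigits_of_sortedDigits_eq_replicate {w n d : ℕ}
    (h : sortedDigits w n = List.replicate w d) : allEqDigits w n :=
  ⟨d, List.perm_replicate.mp (h ▸ (List.mergeSort_perm _ _).symm)⟩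

theorem kap_four_eq {n a b c d : ℕ} (hs : sortedDigits 4 n = [d, c, b, a]) :
    kap 4 n = 999 * (a - d) + 90 * (b - c) := by
  obtain ⟨hdc, hcb, hba⟩ := sortedDigits_four_chain hs
  simp only [kap, hs, List.reverse_cons, List.reverse_nil, List.nil_append, List.cons_append,
    Nat.ofDigits_cons, Nat.ofDigits_nil]
  omega

theorem sum_digits_of_ofDigits_eq {m : ℕ} (L : List ℕ) (hm : m = Nat.ofDigits 10 L)
    (hL : ∀ x ∈ L, x < 10) : (Nat.digits 10 m).sum = L.sum :=
  hm ▸ Nat.sum_digits_ofDigits_eq_sum (by norm_num) (l := L.length) ⟨rfl, hL⟩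

theorem sum_digits_999_mul_add_90_mul {α β : ℕ} (hα₁ : 1 ≤ α) (hα₉ : α ≤ 9) (hβ₁ : 1 ≤ β)
    (hβ₉ : β ≤ 9) : (Nat.digits 10 (999 * α + 90 * β)).sum = 18 := by
  rw [sum_digits_of_ofDigits_eq [10 - α, 9 - β, β - 1, α]
    (by simp only [Nat.ofDigits_cons, Nat.ofDigits_nil]; omega)
    (fun x hx => by simp only [List.mem_cons, List.not_mem_nil, or_false] at hx; omega)]
  simp only [List.sum_cons, List.sum_nil]
  omega

theorem sum_digits_999_mul {α : ℕ} (hα₁ : 1 ≤ α) (hα₉ : α ≤ 9) :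
    (Nat.digits 10 (999 * α)).sum = 27 := by
  rw [sum_digits_of_ofDigits_eq [10 - α, 9, 9, α - 1]
    (by simp only [Nat.ofDigits_cons, Nat.ofDigits_nil]; omega)
    (fun x hx => by simp only [List.mem_cons, List.not_mem_nil, or_false] at hx; omega)]
  simp only [List.sum_cons, List.sum_nil]
  omega

theorem stmt5_general (n a₀ b₀ c₀ d₀ : ℕ)
    (h2 : ¬ allEqDigits 4 n)
    (hs : sortedDigits 4 n = [d₀, c₀, b₀, a₀]) :
    (c₀ < b₀ → (Nat.digits 10 (kap 4 n)).sum = 18) ∧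
    (b₀ = c₀ → (Nat.digits 10 (kap 4 n)).sum = 27) := by
  obtain ⟨hdc, hcb, hba⟩ := sortedDigits_four_chain hs
  have ha₀ : a₀ < 10 := lt_ten_of_mem_sortedDigits (n := n) (w := 4) (by simp [hs])
  have hda : d₀ < a₀ := by
    by_contra! had
    refine h2 (allEqDigits_of_sortedDigits_eq_replicate (d := d₀) ?_)
    rw [hs, show c₀ = d₀ by omega, show b₀ = d₀ by omega, show a₀ = d₀ by omega]
    rfl
  rw [kap_four_eq hs]
  refine ⟨fun hcb' => ?_, fun hbc => ?_⟩
  · exact sum_digits_999_mul_add_90_mul (by omega) (by omega) (by omega) (by omega)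
  · rw [hbc, Nat.sub_self, mul_zero, add_zero]
    exact sum_digits_999_mul (by omega) (by omega)

theorem stmt5 (n a₀ b₀ c₀ d₀ : ℕ) (h0 : 0 < n) (h1 : n < 10000)
    (h2 : ¬ allEqDigits 4 n)
    (hs : sortedDigits 4 n = [d₀, c₀, b₀, a₀]) :
    (c₀ < b₀ → (Nat.digits 10 (kap 4 n)).sum = 18) ∧
    (b₀ = c₀ → (Nat.digits 10 (kap 4 n)).sum = 27) :=
  stmt5_general n a₀ b₀ c₀ d₀ h2 hs
end

section
/- Every 2-digit number n with distinct digits eventually enters the 5-cycle 09 → 81 → 63 → 27 → 45 → 09 under iteration of the Kaprekar map; in particular K⁵(9) = 9 where 9 = '09'. -/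
/-!
A two-digit string with digits `a ≠ b` is sent to `9 * |a - b|`, a multiple `9 * d` with
`1 ≤ d ≤ 9`. The digits of `9 * d` are `d - 1` and `10 - d`, so the next image is
`9 * |11 - 2 * d|`, an odd multiple of `9` below `90`; these are exactly the five numbers
of the cycle.
-/

lemma List.mergeSort_pair {α : Type*} [LinearOrder α] (a b : α) :
    [a, b].mergeSort (· ≤ ·) = [min a b, max a b] := by
  rcases le_or_gt a b with h | h
  · simp [List.mergeSort, h]
  · simp [List.mergeSort, h.not_ge, h.le]

lemma padDigits_two_of_lt {n : ℕ} (hn : n < 100) : padDigits 2 n = [n % 10, n / 10] := by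
  rcases Nat.eq_zero_or_pos n with rfl | hpos
  · rfl
  rw [padDigits, Nat.digits_def' (by norm_num) hpos]
  rcases Nat.eq_zero_or_pos (n / 10) with h0 | hq0
  · simp [h0]
  · simp [Nat.digits_of_lt 10 (n / 10) hq0.ne' (by omega)]

lemma allEqDigits_two_of_lt {n : ℕ} (hn : n < 100) (h : n % 10 = n / 10) : allEqDigits 2 n :=
  ⟨n % 10, by rw [padDigits_two_of_lt hn, ← h]; rfl⟩

lemma kap_two_of_lt {n : ℕ} (hn : n < 100) :
    kap 2 n = 9 * (max (n % 10) (n / 10) - min (n % 10) (n / 10)) := by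
  simp only [kap, sortedDigits, padDigits_two_of_lt hn, List.mergeSort_pair, List.reverse_cons,
    List.reverse_nil, List.nil_append, List.cons_append, Nat.ofDigits_cons, Nat.ofDigits_nil]
  have := min_le_max (a := n % 10) (b := n / 10)
  omega

lemma kap_two_nine_mul_mem_cycle {d : ℕ} (hd₁ : 1 ≤ d) (hd₉ : d ≤ 9) :
    kap 2 (9 * d) ∈ ({9, 81, 63, 27, 45} : Set ℕ) := by
  interval_cases d <;> norm_num [kap_two_of_lt]

theorem stmt15 :
    kap 2 9 = 81 ∧ kap 2 81 = 63 ∧ kap 2 63 = 27 ∧ kap 2 27 = 45 ∧ kap 2 45 = 9 ∧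
    (kap 2)^[5] 9 = 9 ∧
    (∀ n : ℕ, 0 < n → n < 100 → ¬ allEqDigits 2 n →
      ∃ k : ℕ, (kap 2)^[k] n ∈ ({9, 81, 63, 27, 45} : Set ℕ)) := by
  obtain ⟨h9, h81, h63, h27, h45⟩ :
      kap 2 9 = 81 ∧ kap 2 81 = 63 ∧ kap 2 63 = 27 ∧ kap 2 27 = 45 ∧ kap 2 45 = 9 := by
    norm_num [kap_two_of_lt]
  refine ⟨h9, h81, h63, h27, h45, ?_, ?_⟩
  · simp only [Function.iterate_succ_apply', Function.iterate_zero_apply, h9, h81, h63, h27, h45]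
  · intro n _ hn hne
    have hdigits : n % 10 ≠ n / 10 := fun h => hne (allEqDigits_two_of_lt hn h)
    refine ⟨2, ?_⟩
    rw [Function.iterate_succ_apply', Function.iterate_one, kap_two_of_lt hn]
    apply kap_two_nine_mul_mem_cycle <;> omega
end

section
/- The numbers 53955 and 59994 form a 2-cycle of the 5-digit Kaprekar map: K(53955) = 59994 and K(59994) = 53955. -/
lemma sortedDigits_five_53955 : sortedDigits 5 53955 = [3, 5, 5, 5, 9] := by
  simp [sortedDigits, padDigits, List.mergeSort]

lemma sortedDigits_five_59994 : sortedDigits 5 59994 = [4, 5, 9, 9, 9] := by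
  simp [sortedDigits, padDigits, List.mergeSort]

theorem stmt17 : kap 5 53955 = 59994 ∧ kap 5 59994 = 53955 := by
  constructor
  · calc kap 5 53955 = 95553 - 35559 := by
          rw [kap, sortedDigits_five_53955]; norm_num [Nat.ofDigits]
      _ = 59994 := by norm_num
  · calc kap 5 59994 = 99954 - 45999 := by
          rw [kap, sortedDigits_five_59994]; norm_num [Nat.ofDigits]
      _ = 53955 := by norm_num
end

section
/- For every w ≥ 3, the number 4·10^(w-1) + 9·(10^(w-2) + ... + 10) + 5 (i.e., the digit string 4 9 ... 9 5 with w-2 nines) is a fixed point of the transformation T defined by: sort the digits of n descending to get X = (a₀, b₀, ..., z₀), swap the first and last digits of X to get Y, and set T(n) = X - Y. -/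
/-- Swap the first and last entries of a list. -/
def swapEnds (l : List ℕ) : List ℕ :=
  (l.set 0 (l.getD (l.length - 1) 0)).set (l.length - 1) (l.getD 0 0)

/-- The transformation `T`: sort the digits of `n` descending to get `X`, swap the
extreme (first and last) digits of `X` to get `Y`, and return `X - Y`.
(In the little-endian representation `sortedDigits w n` of `X`, swapping the extreme
digits of `X` corresponds to swapping the first and last entries of the list.) -/
def kapSwap (w n : ℕ) : ℕ :=
  Nat.ofDigits 10 (sortedDigits w n) - Nat.ofDigits 10 (swapEnds (sortedDigits w n))


/-! The digits of `4 9…9 5` sort to `9…9 5 4`, so swapping the extreme digits of the descending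
arrangement exchanges `a₀ = 9` and `z₀ = 4`. For any sorted digit list the two arrangements differ only
in those two places, whence `T(n) = α (10^(w-1) - 1)` with `α = a₀ - z₀`; for `α = 5` this is
`5 · 9…9 = 4 9…9 5`. -/

open List

theorem swapEnds_cons_append_singleton (a c : ℕ) (l : List ℕ) :
    swapEnds (a :: l ++ [c]) = c :: l ++ [a] := by
  simp [swapEnds]

theorem Nat.ofDigits_cons_append_singleton (b a c : ℕ) (l : List ℕ) :
    Nat.ofDigits b (a :: l ++ [c]) = a + b * Nat.ofDigits b l + b ^ (l.length + 1) * c := by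
  rw [cons_append, Nat.ofDigits_cons, Nat.ofDigits_append, Nat.ofDigits_singleton, pow_succ]
  ring

theorem Nat.ofDigits_sub_ofDigits_swapEnds (b : ℕ) {a c : ℕ} (hac : a ≤ c) (l : List ℕ) :
    Nat.ofDigits b (a :: l ++ [c]) - Nat.ofDigits b (swapEnds (a :: l ++ [c]))
      = (c - a) * (b ^ (l.length + 1) - 1) := by
  obtain ⟨d, rfl⟩ := Nat.exists_eq_add_of_le hac
  rw [swapEnds_cons_append_singleton, Nat.ofDigits_cons_append_singleton,
    Nat.ofDigits_cons_append_singleton, Nat.add_sub_cancel_left, Nat.mul_sub_one, mul_add,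
    mul_comm d]
  omega

theorem kapSwap_eq_of_sortedDigits_eq {w n a c : ℕ} {l : List ℕ}
    (h : sortedDigits w n = a :: l ++ [c]) :
    kapSwap w n = (c - a) * (10 ^ (l.length + 1) - 1) := by
  have hsorted : (a :: l ++ [c]).Pairwise (· ≤ ·) := by
    rw [← h]
    exact pairwise_mergeSort' _ _
  have hac : a ≤ c := rel_of_pairwise_cons hsorted (by simp)
  rw [kapSwap, h, Nat.ofDigits_sub_ofDigits_swapEnds 10 hac]

theorem sortedDigits_eq_of_perm {w n : ℕ} {S : List ℕ} (hperm : padDigits w n ~ S)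
    (hS : S.Pairwise (· ≤ ·)) : sortedDigits w n = S :=
  (mergeSort_perm _ _).trans hperm |>.eq_of_pairwise' (pairwise_mergeSort' _ _) hS

theorem padDigits_ofDigits {L : List ℕ} (hlt : ∀ d ∈ L, d < 10)
    (hlast : ∀ h : L ≠ [], L.getLast h ≠ 0) : padDigits L.length (Nat.ofDigits 10 L) = L := by
  rw [padDigits, Nat.digits_ofDigits 10 (by norm_num) L hlt hlast, take_left]

theorem Nat.ofDigits_replicate (b d k : ℕ) :
    Nat.ofDigits b (replicate k d) = d * ∑ i ∈ Finset.range k, b ^ i := by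
  induction k with
  | zero => simp
  | succ k ih =>
    rw [replicate_succ, Nat.ofDigits_cons, ih, Finset.sum_range_succ', mul_add, Finset.mul_sum,
      Finset.mul_sum, Finset.mul_sum, pow_zero, mul_one, add_comm]
    exact congrArg (· + d) (Finset.sum_congr rfl fun i _ ↦ by ring)

-- Little-endian form of `α (b^(m+1) - 1) = (α-1, b-1, …, b-1, b-α)` in base `b`.
theorem mul_base_pow_sub_one_eq_ofDigits {b α : ℕ} (h1 : 1 ≤ α) (hb : α ≤ b) (m : ℕ) :
    α * (b ^ (m + 1) - 1) = Nat.ofDigits b ((b - α) :: replicate m (b - 1) ++ [α - 1]) := by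
  rw [Nat.ofDigits_cons_append_singleton, Nat.ofDigits_replicate, length_replicate]
  have hgeom := geom_sum_mul_add (b - 1) m
  rw [Nat.sub_add_cancel (h1.trans hb)] at hgeom
  zify [h1, hb, h1.trans hb, Nat.one_le_pow (m + 1) b (by omega)] at hgeom ⊢
  linear_combination (-(b : ℤ)) * hgeom

theorem stmt19 (w : ℕ) (hw : 3 ≤ w) :
    kapSwap w (4 * 10 ^ (w - 1) + 9 * (∑ i ∈ Finset.Ico 1 (w - 1), 10 ^ i) + 5)
      = 4 * 10 ^ (w - 1) + 9 * (∑ i ∈ Finset.Ico 1 (w - 1), 10 ^ i) + 5 := by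
  obtain ⟨m, rfl⟩ : ∃ m, w = m + 3 := ⟨w - 3, by omega⟩
  set L := 5 :: replicate (m + 1) 9 ++ [4]
  have hsum : ∑ i ∈ Finset.Ico 1 (m + 2), 10 ^ i = 10 * ∑ i ∈ Finset.range (m + 1), 10 ^ i := by
    rw [Finset.sum_Ico_eq_sum_range, Finset.mul_sum]
    simp [pow_add]
  have hn : 4 * 10 ^ (m + 2) + 9 * (∑ i ∈ Finset.Ico 1 (m + 2), 10 ^ i) + 5
      = Nat.ofDigits 10 L := by
    rw [Nat.ofDigits_cons_append_singleton, Nat.ofDigits_replicate, length_replicate, hsum]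
    ring
  have hpad : padDigits (m + 3) (Nat.ofDigits 10 L) = L := by
    rw [show m + 3 = L.length by simp [L]]
    exact padDigits_ofDigits (by simp [L]) (by simp [L])
  have hsort : sortedDigits (m + 3) (Nat.ofDigits 10 L) = 4 :: (5 :: replicate m 9) ++ [9] := by
    rw [cons_append, cons_append, ← replicate_succ']
    refine sortedDigits_eq_of_perm ?_ (by simp [pairwise_replicate])
    rw [hpad]
    exact perm_append_singleton 4 _
  rw [show m + 3 - 1 = m + 2 from rfl, hn, kapSwap_eq_of_sortedDigits_eq hsort, length_cons,
    length_replicate]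
  exact mul_base_pow_sub_one_eq_ofDigits (b := 10) (α := 5) (by norm_num) (by norm_num) (m + 1)
end
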